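/- arXiv:1706.04270 — 9 statements merged into one kernel-verified Lean document; each statement's English description precedes it below -/
import Mathlib

section
/- With L, c, prime, and ρ as in the abstract commutator setting, for all α, β ∈ L we have ρ(c(α,β)) = ρ(α ⊓ β) = ρ(α) ⊓ ρ(β). -/
namespace Reticulation

variable {L : Type*} [CompleteLattice L]

/-- `p` is a prime element with respect to the abstract commutator `c`. -/
def IsPrimeEl (c : L → L → L) (p : L) : Prop :=
  p ≠ ⊤ ∧ ∀ a b : L, c a b ≤ p → a ≤ p ∨ b ≤ p

/-- The radical of `θ`: infimum of all prime elements above `θ`. -/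
def rho (c : L → L → L) (θ : L) : L :=
  sInf {p : L | IsPrimeEl c p ∧ θ ≤ p}

/-- `itc c α β n` is the iterated commutator `[α,β]^(n+1)`. -/
def itc (c : L → L → L) (α β : L) : ℕ → L
  | 0 => c α β
  | n + 1 => c (itc c α β n) (itc c α β n)

/-- `expc c α β n` is the iterated commutator `[α,β]^n`, for `n ≥ 1`. -/
def expc (c : L → L → L) (α β : L) (n : ℕ) : L :=
  itc c α β (n - 1)

theorem rho_commutator_eq_rho_inf (c : L → L → L)
    (hcomm : ∀ a b : L, c a b = c b a)
    (hdist : ∀ (s : Set L) (b : L), c (sSup s) b = ⨆ a ∈ s, c a b)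
    (hle : ∀ a b : L, c a b ≤ a ⊓ b) :
    ∀ α β : L, rho c (c α β) = rho c (α ⊓ β) ∧ rho c (α ⊓ β) = rho c α ⊓ rho c β := by
  have mono : ∀ θ θ' : L, θ ≤ θ' → rho c θ ≤ rho c θ' := by
    intro θ θ' h
    exact sInf_le_sInf (fun p hp => ⟨hp.1, h.trans hp.2⟩)
  intro α β
  constructor
  · apply le_antisymm
    · exact mono _ _ (hle α β)
    · apply le_sInf
      intro p hp
      have := hp.1.2 α β hp.2
      rcases this with h | h
      · exact sInf_le ⟨hp.1, inf_le_left.trans h⟩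
      · exact sInf_le ⟨hp.1, inf_le_right.trans h⟩
  · apply le_antisymm
    · exact le_inf (mono _ _ inf_le_left) (mono _ _ inf_le_right)
    · apply le_sInf
      intro p hp
      rcases hp.1.2 α β ((hle α β).trans hp.2) with h | h
      · exact inf_le_left.trans (sInf_le ⟨hp.1, h⟩)
      · exact inf_le_right.trans (sInf_le ⟨hp.1, h⟩)

end Reticulation
end

section
/- With L, c as in the abstract commutator setting, the set RCon = {θ ∈ L | ρ(θ) = θ} of radical elements, ordered by the order of L, with meet given by ⊓ of L and join of a family given by ρ of the join in L, is a complete lattice in which finite meets distribute over arbitrary joins (i.e., a frame). -/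
namespace Reticulation

variable {L : Type*} [CompleteLattice L]

lemma le_rho (c : L → L → L) (θ : L) : θ ≤ rho c θ :=
  le_sInf fun _ hp => hp.2

lemma rho_le_prime (c : L → L → L) {p θ : L} (hp : IsPrimeEl c p) (h : θ ≤ p) :
    rho c θ ≤ p :=
  sInf_le ⟨hp, h⟩

lemma rho_mono (c : L → L → L) {α β : L} (h : α ≤ β) : rho c α ≤ rho c β :=
  le_sInf fun _ hp => sInf_le ⟨hp.1, h.trans hp.2⟩

lemma rho_idem (c : L → L → L) (θ : L) : rho c (rho c θ) = rho c θ :=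
  le_antisymm (le_sInf fun _ hp => sInf_le ⟨hp.1, rho_le_prime c hp.1 hp.2⟩)
    (le_rho c _)

lemma rho_inf (c : L → L → L) (hle : ∀ a b : L, c a b ≤ a ⊓ b) (α β : L) :
    rho c (α ⊓ β) = rho c α ⊓ rho c β := by
  refine le_antisymm (le_inf (rho_mono c inf_le_left) (rho_mono c inf_le_right)) ?_
  refine le_sInf fun p hp => ?_
  rcases hp.1.2 α β ((hle α β).trans hp.2) with h | h
  · exact inf_le_left.trans (rho_le_prime c hp.1 h)
  · exact inf_le_right.trans (rho_le_prime c hp.1 h)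

theorem radical_elements_form_frame (c : L → L → L)
    (hcomm : ∀ a b : L, c a b = c b a)
    (hdist : ∀ (s : Set L) (b : L), c (sSup s) b = ⨆ a ∈ s, c a b)
    (hle : ∀ a b : L, c a b ≤ a ⊓ b) :
    -- meets of radical elements are radical
    (∀ α β : L, rho c α = α → rho c β = β → rho c (α ⊓ β) = α ⊓ β) ∧
    -- ρ of the join of a family of radical elements is their least upper
    -- bound among radical elements (so RCon is a complete lattice)
    (∀ S : Set L, (∀ θ ∈ S, rho c θ = θ) →
      rho c (rho c (sSup S)) = rho c (sSup S) ∧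
      (∀ θ ∈ S, θ ≤ rho c (sSup S)) ∧
      (∀ ζ : L, rho c ζ = ζ → (∀ θ ∈ S, θ ≤ ζ) → rho c (sSup S) ≤ ζ)) ∧
    -- the frame distributive law in RCon
    (∀ θ : L, rho c θ = θ → ∀ S : Set L, (∀ s ∈ S, rho c s = s) →
      θ ⊓ rho c (sSup S) = rho c (⨆ s ∈ S, θ ⊓ s)) := by
  refine ⟨fun α β hα hβ => ?_, fun S hS => ⟨rho_idem c _, fun θ hθ =>
      (le_sSup hθ).trans (le_rho c _), fun ζ hζ hub => ?_⟩, fun θ hθ S hS => ?_⟩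
  · rw [rho_inf c hle, hα, hβ]
  · exact hζ ▸ rho_mono c (sSup_le hub)
  · have h1 : c θ (sSup S) ≤ ⨆ s ∈ S, θ ⊓ s := by
      rw [hcomm, hdist]
      exact iSup_le fun s => iSup_le fun hs =>
        le_iSup_of_le s (le_iSup_of_le hs ((hcomm s θ ▸ hle θ s)))
    have h2 : rho c (θ ⊓ sSup S) ≤ rho c (⨆ s ∈ S, θ ⊓ s) := by
      refine le_sInf fun p hp => ?_
      rcases hp.1.2 θ (sSup S) (h1.trans hp.2) with h | h
      · exact rho_le_prime c hp.1 (inf_le_left.trans h)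
      · exact rho_le_prime c hp.1 (inf_le_right.trans h)
    have h3 : rho c (⨆ s ∈ S, θ ⊓ s) ≤ rho c (θ ⊓ sSup S) :=
      rho_mono c (iSup_le fun s => iSup_le fun hs =>
        le_inf inf_le_left (inf_le_right.trans (le_sSup hs)))
    calc θ ⊓ rho c (sSup S) = rho c θ ⊓ rho c (sSup S) := by rw [hθ]
      _ = rho c (θ ⊓ sSup S) := (rho_inf c hle _ _).symm
      _ = rho c (⨆ s ∈ S, θ ⊓ s) := le_antisymm h2 h3


end Reticulation
end

section
/- With L, c, ρ as in the abstract commutator setting, define the equivalence α ≡ β iff ρ(α) = ρ(β). Then ≡ is a congruence for both the join and for c, and moreover c(α,β) ≡ α ⊓ β for all α, β. Hence the quotient L/≡ with the induced operations [α]∨[β] = [α⊔β] and [α]∧[β] = [α⊓β] is a bounded distributive lattice. -/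
namespace Reticulation

variable {L : Type*} [CompleteLattice L]

lemma rho_eq_of_iff (c : L → L → L) {θ θ' : L}
    (h : ∀ p, IsPrimeEl c p → (θ ≤ p ↔ θ' ≤ p)) : rho c θ = rho c θ' := by
  unfold rho
  congr 1
  ext p
  exact ⟨fun ⟨hp, hl⟩ => ⟨hp, (h p hp).1 hl⟩, fun ⟨hp, hl⟩ => ⟨hp, (h p hp).2 hl⟩⟩

lemma le_of_rho_eq (c : L → L → L) {θ θ' p : L} (h : rho c θ = rho c θ')
    (hp : IsPrimeEl c p) (hl : θ ≤ p) : θ' ≤ p :=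
  (le_rho c θ').trans (h ▸ sInf_le ⟨hp, hl⟩)

lemma c_le_iff (c : L → L → L) (hle : ∀ a b : L, c a b ≤ a ⊓ b)
    {p : L} (hp : IsPrimeEl c p) (α β : L) :
    c α β ≤ p ↔ α ≤ p ∨ β ≤ p := by
  constructor
  · exact hp.2 α β
  · rintro (h | h)
    · exact ((hle α β).trans inf_le_left).trans h
    · exact ((hle α β).trans inf_le_right).trans h

lemma inf_le_iff' (c : L → L → L) (hle : ∀ a b : L, c a b ≤ a ⊓ b)
    {p : L} (hp : IsPrimeEl c p) (α β : L) :
    α ⊓ β ≤ p ↔ α ≤ p ∨ β ≤ p := by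
  constructor
  · intro h
    exact hp.2 α β ((hle α β).trans h)
  · rintro (h | h)
    · exact inf_le_left.trans h
    · exact inf_le_right.trans h

theorem equiv_rho_congruence (c : L → L → L)
    (hcomm : ∀ a b : L, c a b = c b a)
    (hdist : ∀ (s : Set L) (b : L), c (sSup s) b = ⨆ a ∈ s, c a b)
    (hle : ∀ a b : L, c a b ≤ a ⊓ b) :
    -- ≡ is a congruence for ⊔, for c, and hence for ⊓
    (∀ α α' β β' : L, rho c α = rho c α' → rho c β = rho c β' →
      rho c (α ⊔ β) = rho c (α' ⊔ β') ∧
      rho c (c α β) = rho c (c α' β') ∧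
      rho c (α ⊓ β) = rho c (α' ⊓ β')) ∧
    -- c(α,β) ≡ α ⊓ β
    (∀ α β : L, rho c (c α β) = rho c (α ⊓ β)) ∧
    -- distributivity of the quotient lattice
    (∀ α β γ : L, rho c (α ⊓ (β ⊔ γ)) = rho c ((α ⊓ β) ⊔ (α ⊓ γ))) ∧
    -- boundedness of the quotient lattice
    (∀ α : L, rho c (α ⊔ ⊥) = rho c α ∧ rho c (α ⊓ ⊤) = rho c α) := by
  constructor
  · intro α α' β β' hα hβ
    refine ⟨?_, ?_, ?_⟩
    · refine rho_eq_of_iff c fun p hp => ?_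
      simp only [sup_le_iff]
      exact ⟨fun ⟨h1, h2⟩ => ⟨le_of_rho_eq c hα hp h1, le_of_rho_eq c hβ hp h2⟩,
        fun ⟨h1, h2⟩ => ⟨le_of_rho_eq c hα.symm hp h1, le_of_rho_eq c hβ.symm hp h2⟩⟩
    · refine rho_eq_of_iff c fun p hp => ?_
      rw [c_le_iff c hle hp, c_le_iff c hle hp]
      constructor
      · rintro (h | h)
        · exact Or.inl (le_of_rho_eq c hα hp h)
        · exact Or.inr (le_of_rho_eq c hβ hp h)
      · rintro (h | h)
        · exact Or.inl (le_of_rho_eq c hα.symm hp h)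
        · exact Or.inr (le_of_rho_eq c hβ.symm hp h)
    · refine rho_eq_of_iff c fun p hp => ?_
      rw [inf_le_iff' c hle hp, inf_le_iff' c hle hp]
      constructor
      · rintro (h | h)
        · exact Or.inl (le_of_rho_eq c hα hp h)
        · exact Or.inr (le_of_rho_eq c hβ hp h)
      · rintro (h | h)
        · exact Or.inl (le_of_rho_eq c hα.symm hp h)
        · exact Or.inr (le_of_rho_eq c hβ.symm hp h)
  refine ⟨fun α β => rho_eq_of_iff c fun p hp => by
      rw [c_le_iff c hle hp, inf_le_iff' c hle hp], ?_, ?_⟩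
  · intro α β γ
    refine rho_eq_of_iff c fun p hp => ?_
    simp only [inf_le_iff' c hle hp, sup_le_iff]
    tauto
  · intro α
    simp


end Reticulation
end

section
/- With L, c as in the abstract commutator setting and iterated commutators [α,β]^n defined by [α,β]^1 = c(α,β), [α,β]^{n+1} = c([α,β]^n,[α,β]^n), for all n ≥ 1 and α, β ∈ L: [α ⊔ β, α ⊔ β]^n ≤ α ⊔ [β,β]^n. -/
namespace Reticulation

variable {L : Type*} [CompleteLattice L]

theorem iterated_commutator_sup_le (c : L → L → L)
    (hcomm : ∀ a b : L, c a b = c b a)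
    (hdist : ∀ (s : Set L) (b : L), c (sSup s) b = ⨆ a ∈ s, c a b)
    (hle : ∀ a b : L, c a b ≤ a ⊓ b) :
    ∀ (n : ℕ), 1 ≤ n → ∀ α β : L,
      expc c (α ⊔ β) (α ⊔ β) n ≤ α ⊔ expc c β β n := by
  have hsup : ∀ a b d : L, c (a ⊔ b) d = c a d ⊔ c b d := by
    intro a b d
    have h := hdist {a, b} d
    rw [sSup_pair] at h
    rw [h, iSup_pair]
  have hsup' : ∀ a b d : L, c d (a ⊔ b) = c d a ⊔ c d b := by
    intro a b d
    rw [hcomm, hsup, hcomm a d, hcomm b d]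
  have key : ∀ a b : L, c (a ⊔ b) (a ⊔ b) ≤ a ⊔ c b b := by
    intro a b
    rw [hsup, hsup', hsup']
    have h1 : c a a ≤ a := le_trans (hle a a) inf_le_left
    have h2 : c a b ≤ a := le_trans (hle a b) inf_le_left
    have h3 : c b a ≤ a := le_trans (hle b a) inf_le_right
    exact sup_le (sup_le (h1.trans le_sup_left) (h2.trans le_sup_left))
      (sup_le (h3.trans le_sup_left) le_sup_right)
  have hmono : ∀ a a' b b' : L, a ≤ a' → b ≤ b' → c a b ≤ c a' b' := by
    intro a a' b b' ha hb
    have step1 : c a b ≤ c a b' := by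
      have h := hsup' b b' a
      rw [sup_eq_right.mpr hb] at h
      rw [h]; exact le_sup_left
    have step2 : c a b' ≤ c a' b' := by
      have h := hsup a a' b'
      rw [sup_eq_right.mpr ha] at h
      rw [h]; exact le_sup_left
    exact step1.trans step2
  have main : ∀ (m : ℕ) (α β : L), itc c (α ⊔ β) (α ⊔ β) m ≤ α ⊔ itc c β β m := by
    intro m
    induction m with
    | zero => intro α β; exact key α β
    | succ k ih =>
        intro α β
        calc itc c (α ⊔ β) (α ⊔ β) (k + 1)
            = c (itc c (α ⊔ β) (α ⊔ β) k) (itc c (α ⊔ β) (α ⊔ β) k) := rfl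
          _ ≤ c (α ⊔ itc c β β k) (α ⊔ itc c β β k) := hmono _ _ _ _ (ih α β) (ih α β)
          _ ≤ α ⊔ c (itc c β β k) (itc c β β k) := key _ _
          _ = α ⊔ itc c β β (k + 1) := rfl
  intro n _ α β
  exact main (n - 1) α β

end Reticulation
end

section
/- With L, c as in the abstract commutator setting, assume additionally c(θ,⊤) = θ for all θ ∈ L. Then for all α, β ∈ L with α ⊔ β = ⊤, we have c(α,β) = α ⊓ β. -/
namespace Reticulation

variable {L : Type*} [CompleteLattice L]

theorem commutator_eq_inf_of_sup_top (c : L → L → L)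
    (hcomm : ∀ a b : L, c a b = c b a)
    (hdist : ∀ (s : Set L) (b : L), c (sSup s) b = ⨆ a ∈ s, c a b)
    (hle : ∀ a b : L, c a b ≤ a ⊓ b)
    (htop : ∀ θ : L, c θ ⊤ = θ) :
    ∀ α β : L, α ⊔ β = ⊤ → c α β = α ⊓ β := by
  have hsup : ∀ a a' b : L, c (a ⊔ a') b = c a b ⊔ c a' b := by
    intro a a' b
    have := hdist {a, a'} b
    rw [sSup_pair] at this; rw [this, iSup_pair]
  have hmono : ∀ a a' b : L, a ≤ a' → c a b ≤ c a' b := by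
    intro a a' b h
    have : c (a ⊔ a') b = c a b ⊔ c a' b := hsup a a' b
    rw [sup_eq_right.mpr h] at this
    rw [this]
    exact le_sup_left
  intro α β h
  refine le_antisymm (hle α β) ?_
  have h1 : α ⊓ β = c (α ⊓ β) (α ⊔ β) := by rw [h, htop]
  rw [hcomm, hsup] at h1
  have h2 : c α (α ⊓ β) ≤ c α β := by
    rw [hcomm α (α ⊓ β), hcomm α β]
    exact hmono _ _ _ inf_le_right
  have h3 : c β (α ⊓ β) ≤ c α β := by
    rw [hcomm β (α ⊓ β), hcomm α β, hcomm β]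
    exact hmono _ _ _ inf_le_left
  rw [h1]
  exact sup_le h2 h3

end Reticulation
end

section
/- With L, c as in the abstract commutator setting with c(θ,⊤) = θ for all θ, if α ⊔ β = ⊤ and α ⊔ γ = ⊤ then α ⊔ c(β,γ) = ⊤ and α ⊔ (β ⊓ γ) = ⊤. Consequently, for every n ≥ 1, α ⊔ β = ⊤ implies [α,α]^n ⊔ [β,β]^n = ⊤. -/
namespace Reticulation

variable {L : Type*} [CompleteLattice L]

theorem sup_top_commutator_props (c : L → L → L)
    (hcomm : ∀ a b : L, c a b = c b a)
    (hdist : ∀ (s : Set L) (b : L), c (sSup s) b = ⨆ a ∈ s, c a b)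
    (hle : ∀ a b : L, c a b ≤ a ⊓ b)
    (htop : ∀ θ : L, c θ ⊤ = θ) :
    (∀ α β γ : L, α ⊔ β = ⊤ → α ⊔ γ = ⊤ →
      α ⊔ c β γ = ⊤ ∧ α ⊔ (β ⊓ γ) = ⊤) ∧
    (∀ (n : ℕ), 1 ≤ n → ∀ α β : L, α ⊔ β = ⊤ →
      expc c α α n ⊔ expc c β β n = ⊤) := by

  -- binary distributivity
  have hd2 : ∀ a b d : L, c (a ⊔ b) d = c a d ⊔ c b d := by
    intro a b d
    have h := hdist {a, b} d
    rw [← sSup_pair, h, iSup_pair]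
  have hd2' : ∀ a b d : L, c d (a ⊔ b) = c d a ⊔ c d b := by
    intro a b d
    rw [hcomm, hd2, hcomm a d, hcomm b d]
  -- key lemma
  have key : ∀ α β γ : L, α ⊔ β = ⊤ → α ⊔ γ = ⊤ → α ⊔ c β γ = ⊤ := by
    intro α β γ h1 h2
    have htt : c (α ⊔ β) (α ⊔ γ) = ⊤ := by rw [h1, h2, htop]
    have hexp : c (α ⊔ β) (α ⊔ γ) =
        (c α α ⊔ c α γ) ⊔ (c β α ⊔ c β γ) := by
      rw [hd2, hd2', hd2']
    have hbound : c (α ⊔ β) (α ⊔ γ) ≤ α ⊔ c β γ := by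
      rw [hexp]
      have h1' : c α α ≤ α := (hle α α).trans inf_le_left
      have h2' : c β α ≤ α := (hle β α).trans inf_le_right
      have h3' : c α γ ≤ α := (hle α γ).trans inf_le_left
      exact sup_le (sup_le (h1'.trans le_sup_left) (h3'.trans le_sup_left))
        (sup_le (h2'.trans le_sup_left) le_sup_right)
    exact top_le_iff.mp (htt ▸ hbound)
  have part1 : ∀ α β γ : L, α ⊔ β = ⊤ → α ⊔ γ = ⊤ →
      α ⊔ c β γ = ⊤ ∧ α ⊔ (β ⊓ γ) = ⊤ := by
    intro α β γ h1 h2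
    have hk := key α β γ h1 h2
    refine ⟨hk, top_le_iff.mp ?_⟩
    rw [← hk]
    exact sup_le_sup_left (hle β γ) α
  refine ⟨part1, ?_⟩
  -- iterated commutator lemma, by induction on itc index
  have base : ∀ α β : L, α ⊔ β = ⊤ → c α α ⊔ c β β = ⊤ := by
    intro α β h
    have h1 : α ⊔ c β β = ⊤ := key α β β h h
    have h2 : c β β ⊔ α = ⊤ := by rwa [sup_comm] at h1
    have h3 : c β β ⊔ c α α = ⊤ := key (c β β) α α h2 h2
    rwa [sup_comm] at h3
  have main : ∀ m : ℕ, ∀ α β : L, α ⊔ β = ⊤ → itc c α α m ⊔ itc c β β m = ⊤ := by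
    intro m
    induction m with
    | zero => exact base
    | succ k ih =>
      intro α β h
      exact base (itc c α α k) (itc c β β k) (ih α β h)
  intro n hn α β h
  have : n - 1 + 1 = n := Nat.succ_pred_eq_of_pos hn
  exact main (n - 1) α β h


end Reticulation
end

section
/- With L, c as in the abstract commutator setting with c(θ,⊤) = θ for all θ, if α is complemented in L, meaning there exists β with α ⊔ β = ⊤ and α ⊓ β = ⊥, then for every θ ∈ L, c(α,θ) = α ⊓ θ. -/
namespace Reticulation

variable {L : Type*} [CompleteLattice L]

theorem commutator_eq_inf_of_complemented (c : L → L → L)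
    (hcomm : ∀ a b : L, c a b = c b a)
    (hdist : ∀ (s : Set L) (b : L), c (sSup s) b = ⨆ a ∈ s, c a b)
    (hle : ∀ a b : L, c a b ≤ a ⊓ b)
    (htop : ∀ θ : L, c θ ⊤ = θ) :
    ∀ α : L, (∃ β : L, α ⊔ β = ⊤ ∧ α ⊓ β = ⊥) →
      ∀ θ : L, c α θ = α ⊓ θ := by
  have hsup : ∀ a b x : L, c (a ⊔ b) x = c a x ⊔ c b x := by
    intro a b x
    have := hdist {a, b} x
    rw [sSup_pair] at this
    rw [this, iSup_pair]
  have hmono : ∀ a b x : L, a ≤ b → c a x ≤ c b x := by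
    intro a b x hab
    have : c (a ⊔ b) x = c a x ⊔ c b x := hsup a b x
    rw [sup_eq_right.mpr hab] at this
    rw [this]; exact le_sup_left
  rintro α ⟨β, hsupβ, hinfβ⟩ θ
  refine le_antisymm (hle α θ) ?_
  set γ := α ⊓ θ with hγ
  have h1 : γ = c γ α ⊔ c γ β := by
    calc γ = c γ ⊤ := (htop γ).symm
    _ = c γ (α ⊔ β) := by rw [hsupβ]
    _ = c (α ⊔ β) γ := hcomm _ _
    _ = c α γ ⊔ c β γ := hsup _ _ _
    _ = c γ α ⊔ c γ β := by rw [hcomm α γ, hcomm β γ]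
  have h2 : c γ β = ⊥ := by
    refine le_bot_iff.mp ?_
    calc c γ β ≤ γ ⊓ β := hle _ _
    _ ≤ α ⊓ β := inf_le_inf_right β inf_le_left
    _ = ⊥ := hinfβ
  rw [h2, sup_bot_eq] at h1
  calc γ = c γ α := h1
  _ ≤ c θ α := hmono _ _ _ inf_le_right
  _ = c α θ := hcomm _ _

end Reticulation
end

section
/- With L, c as in the abstract commutator setting with c(θ,⊤) = θ for all θ, the set B(L) of complemented elements of L (those α for which some β satisfies α ⊔ β = ⊤ and α ⊓ β = ⊥) is closed under ⊔ and ⊓, contains ⊥ and ⊤, and forms a Boolean algebra in which the complement of θ is θ^⊥ = ⨆ {α | c(θ,α) = ⊥}. -/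
namespace Reticulation

variable {L : Type*} [CompleteLattice L]

/-- The set of complemented elements of L. -/
def BC : Set L := {α : L | ∃ β : L, α ⊔ β = ⊤ ∧ α ⊓ β = ⊥}

lemma cdist2 (c : L → L → L)
    (hdist : ∀ (s : Set L) (b : L), c (sSup s) b = ⨆ a ∈ s, c a b)
    (a b d : L) : c (a ⊔ b) d = c a d ⊔ c b d := by
  rw [← sSup_pair, hdist, iSup_pair]

lemma cmono (c : L → L → L)
    (hdist : ∀ (s : Set L) (b : L), c (sSup s) b = ⨆ a ∈ s, c a b)
    {a a' : L} (d : L) (h : a ≤ a') : c a d ≤ c a' d := by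
  have := cdist2 c hdist a a' d
  rw [sup_eq_right.mpr h] at this
  rw [this]
  exact le_sup_left

/-- If `α` is complemented, then `c θ α = θ ⊓ α` for all `θ`. -/
lemma cmeet (c : L → L → L)
    (hcomm : ∀ a b : L, c a b = c b a)
    (hdist : ∀ (s : Set L) (b : L), c (sSup s) b = ⨆ a ∈ s, c a b)
    (hle : ∀ a b : L, c a b ≤ a ⊓ b)
    (htop : ∀ θ : L, c θ ⊤ = θ)
    {α β : L} (h1 : α ⊔ β = ⊤) (h2 : α ⊓ β = ⊥) (θ : L) :
    c θ α = θ ⊓ α := by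
  refine le_antisymm (hle θ α) ?_
  have key : θ ⊓ α = c (θ ⊓ α) α ⊔ c (θ ⊓ α) β := by
    conv_lhs => rw [← htop (θ ⊓ α), ← h1, hcomm, cdist2 c hdist, hcomm α, hcomm β]
  have hb : c (θ ⊓ α) β = ⊥ := by
    refine le_bot_iff.mp ?_
    calc c (θ ⊓ α) β ≤ (θ ⊓ α) ⊓ β := hle _ _
    _ ≤ α ⊓ β := inf_le_inf_right β inf_le_right
    _ = ⊥ := h2
  rw [hb, sup_bot_eq] at key
  rw [key]
  exact cmono c hdist α inf_le_left

/-- Meets with complemented elements distribute over joins. -/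
lemma inf_sup_distrib (c : L → L → L)
    (hcomm : ∀ a b : L, c a b = c b a)
    (hdist : ∀ (s : Set L) (b : L), c (sSup s) b = ⨆ a ∈ s, c a b)
    (hle : ∀ a b : L, c a b ≤ a ⊓ b)
    (htop : ∀ θ : L, c θ ⊤ = θ)
    {a : L} (ha : a ∈ BC) (b d : L) :
    a ⊓ (b ⊔ d) = (a ⊓ b) ⊔ (a ⊓ d) := by
  obtain ⟨β, h1, h2⟩ := ha
  have e : ∀ θ : L, c θ a = θ ⊓ a := cmeet c hcomm hdist hle htop h1 h2
  calc a ⊓ (b ⊔ d) = (b ⊔ d) ⊓ a := inf_comm _ _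
  _ = c (b ⊔ d) a := (e _).symm
  _ = c b a ⊔ c d a := cdist2 c hdist b d a
  _ = (b ⊓ a) ⊔ (d ⊓ a) := by rw [e, e]
  _ = (a ⊓ b) ⊔ (a ⊓ d) := by rw [inf_comm b, inf_comm d]

/-- The join of two complemented elements is complemented by the meet of complements. -/
lemma join_comp (c : L → L → L)
    (hcomm : ∀ a b : L, c a b = c b a)
    (hdist : ∀ (s : Set L) (b : L), c (sSup s) b = ⨆ a ∈ s, c a b)
    (hle : ∀ a b : L, c a b ≤ a ⊓ b)
    (htop : ∀ θ : L, c θ ⊤ = θ)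
    {α α' β β' : L} (ha1 : α ⊔ α' = ⊤) (ha2 : α ⊓ α' = ⊥)
    (hb1 : β ⊔ β' = ⊤) (hb2 : β ⊓ β' = ⊥) :
    (α ⊔ β) ⊔ (α' ⊓ β') = ⊤ ∧ (α ⊔ β) ⊓ (α' ⊓ β') = ⊥ := by
  have ha' : α' ∈ BC := ⟨α, by rwa [sup_comm], by rwa [inf_comm]⟩
  constructor
  · have : α' ⊓ (β ⊔ β') = (α' ⊓ β) ⊔ (α' ⊓ β') :=
      inf_sup_distrib c hcomm hdist hle htop ha' β β'
    rw [hb1, inf_top_eq] at this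
    refine top_le_iff.mp ?_
    calc (⊤ : L) = α ⊔ α' := ha1.symm
    _ = α ⊔ ((α' ⊓ β) ⊔ (α' ⊓ β')) := by rw [← this]
    _ ≤ (α ⊔ β) ⊔ (α' ⊓ β') := by
        apply sup_le (le_sup_of_le_left le_sup_left)
        exact sup_le (le_sup_of_le_left (le_sup_of_le_right inf_le_right)) le_sup_right
  · have h : α' ⊓ (α ⊔ β) = (α' ⊓ α) ⊔ (α' ⊓ β) :=
      inf_sup_distrib c hcomm hdist hle htop ha' α β
    rw [inf_comm α' α, ha2, bot_sup_eq] at h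
    refine le_bot_iff.mp ?_
    calc (α ⊔ β) ⊓ (α' ⊓ β') ≤ (α' ⊓ (α ⊔ β)) ⊓ β' := by
          rw [inf_comm α' (α ⊔ β), inf_assoc]
    _ = (α' ⊓ β) ⊓ β' := by rw [h]
    _ ≤ β ⊓ β' := inf_le_inf_right β' inf_le_right
    _ = ⊥ := hb2

theorem boolean_center (c : L → L → L)
    (hcomm : ∀ a b : L, c a b = c b a)
    (hdist : ∀ (s : Set L) (b : L), c (sSup s) b = ⨆ a ∈ s, c a b)
    (hle : ∀ a b : L, c a b ≤ a ⊓ b)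
    (htop : ∀ θ : L, c θ ⊤ = θ) :
    (⊥ : L) ∈ BC ∧ (⊤ : L) ∈ BC ∧
    (∀ α β : L, α ∈ BC → β ∈ BC → α ⊔ β ∈ BC ∧ α ⊓ β ∈ BC) ∧
    -- the lattice of complemented elements is distributive
    (∀ a b d : L, a ∈ BC → b ∈ BC → d ∈ BC →
      a ⊓ (b ⊔ d) = (a ⊓ b) ⊔ (a ⊓ d)) ∧
    -- the complement of θ in BC is θ^⊥ = ⨆ {α | c θ α = ⊥}
    (∀ θ : L, θ ∈ BC →
      sSup {α : L | c θ α = ⊥} ∈ BC ∧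
      θ ⊔ sSup {α : L | c θ α = ⊥} = ⊤ ∧
      θ ⊓ sSup {α : L | c θ α = ⊥} = ⊥) := by
  refine ⟨⟨⊤, by simp, by simp⟩, ⟨⊥, by simp, by simp⟩, ?_, ?_, ?_⟩
  · rintro α β ⟨α', ha1, ha2⟩ ⟨β', hb1, hb2⟩
    constructor
    · obtain ⟨h1, h2⟩ := join_comp c hcomm hdist hle htop ha1 ha2 hb1 hb2
      exact ⟨α' ⊓ β', h1, h2⟩
    · obtain ⟨h1, h2⟩ := join_comp c hcomm hdist hle htop
        (by rwa [sup_comm] : α' ⊔ α = ⊤) (by rwa [inf_comm] : α' ⊓ α = ⊥)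
        (by rwa [sup_comm] : β' ⊔ β = ⊤) (by rwa [inf_comm] : β' ⊓ β = ⊥)
      exact ⟨α' ⊔ β', by rwa [sup_comm], by rwa [inf_comm]⟩
  · intro a b d ha _ _
    exact inf_sup_distrib c hcomm hdist hle htop ha b d
  · rintro θ ⟨β, h1, h2⟩
    have e : ∀ x : L, c x θ = x ⊓ θ := fun x =>
      cmeet c hcomm hdist hle htop h1 h2 x
    have hβ : β ∈ {α : L | c θ α = ⊥} := by
      simp only [Set.mem_setOf_eq, hcomm θ β, e, inf_comm β θ, h2]
    have hsup : θ ⊔ sSup {α : L | c θ α = ⊥} = ⊤ := by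
      refine top_le_iff.mp ?_
      rw [← h1]
      exact sup_le_sup_left (le_sSup hβ) θ
    have hinf : θ ⊓ sSup {α : L | c θ α = ⊥} = ⊥ := by
      rw [inf_comm, ← e, hdist]
      refine le_bot_iff.mp (iSup_le fun α => iSup_le fun hα => ?_)
      rw [hcomm α θ]
      exact le_bot_iff.mpr hα
    exact ⟨⟨θ, by rwa [sup_comm], by rwa [inf_comm]⟩, hsup, hinf⟩

end Reticulation
end

section
/- With L, c as in the abstract commutator setting with c(θ,⊤) = θ for all θ, every complemented element of L is compact in L; that is, if α has a complement and α ≤ ⨆_{i∈I} α_i, and ⊤ is compact in L, then α ≤ ⨆_{j∈F} α_j for some finite F ⊆ I. -/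
namespace Reticulation

variable {L : Type*} [CompleteLattice L]

/-- The December 2024 Mathlib definition of a compact element of a complete lattice
(`CompleteLattice.IsCompactElement`), restated here with its old meaning. -/
def CompleteLattice.IsCompactElement {α : Type*} [CompleteLattice α] (k : α) : Prop :=
  ∀ s : Set α, k ≤ sSup s → ∃ t : Finset α, ↑t ⊆ s ∧ k ≤ t.sup id

/- Since `c ⊤ θ = θ` and `c` distributes over joins, `α = c (β ⊔ γ) α ≤ (β ⊓ α) ⊔ γ` whenever
`β ⊔ γ = ⊤`; for a complement `β` of `α` this gives `α ≤ γ`. Compactness of `⊤` then lets `γ` be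
taken to be a finite subjoin of `⨆ i, a i`. -/

section Commutator

variable {c : L → L → L}

theorem commutator_sup_left (hdist : ∀ (s : Set L) (b : L), c (sSup s) b = ⨆ a ∈ s, c a b)
    (x y z : L) : c (x ⊔ y) z = c x z ⊔ c y z := by
  rw [← sSup_pair, hdist, iSup_insert, iSup_singleton]

theorem le_of_inf_eq_bot_of_top_le_sup (hcomm : ∀ a b : L, c a b = c b a)
    (hdist : ∀ (s : Set L) (b : L), c (sSup s) b = ⨆ a ∈ s, c a b)
    (hle : ∀ a b : L, c a b ≤ a ⊓ b) (htop : ∀ θ : L, c θ ⊤ = θ)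
    {α β γ : L} (hαβ : α ⊓ β = ⊥) (hβγ : ⊤ ≤ β ⊔ γ) : α ≤ γ :=
  calc α = c (β ⊔ γ) α := by rw [top_le_iff.mp hβγ, hcomm, htop]
    _ = c β α ⊔ c γ α := commutator_sup_left hdist β γ α
    _ ≤ ⊥ ⊔ γ := by
      refine sup_le_sup ?_ ((hle γ α).trans inf_le_left)
      rw [← hαβ, inf_comm]
      exact hle β α
    _ = γ := bot_sup_eq γ

end Commutator

theorem exists_finset_le_sup_biSup {k : L} (hk : _root_.IsCompactElement k) {ι : Type*} (β : L)
    (a : ι → L) (h : k ≤ β ⊔ ⨆ i, a i) : ∃ F : Finset ι, k ≤ β ⊔ ⨆ i ∈ F, a i := by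
  rw [← iSup_option_elim] at h
  obtain ⟨t, ht⟩ := CompleteLattice.IsCompactElement.exists_finset_of_le_iSup L hk _ h
  refine ⟨t.eraseNone, ht.trans (iSup₂_le ?_)⟩
  rintro (_ | i) hi
  · exact le_sup_left
  · exact le_sup_of_le_right (le_iSup₂_of_le (f := fun i _ => a i) i
      (Finset.mem_eraseNone.mpr hi) le_rfl)

theorem complemented_is_compact (c : L → L → L)
    (hcomm : ∀ a b : L, c a b = c b a)
    (hdist : ∀ (s : Set L) (b : L), c (sSup s) b = ⨆ a ∈ s, c a b)
    (hle : ∀ a b : L, c a b ≤ a ⊓ b)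
    (htop : ∀ θ : L, c θ ⊤ = θ)
    (htopc : CompleteLattice.IsCompactElement (⊤ : L)) :
    ∀ α : L, (∃ β : L, α ⊔ β = ⊤ ∧ α ⊓ β = ⊥) →
      ∀ {ι : Type*} (a : ι → L), α ≤ ⨆ i, a i →
        ∃ F : Finset ι, α ≤ ⨆ i ∈ F, a i := by
  rintro α ⟨β, hsup, hinf⟩ ι a hα
  have hcover : ⊤ ≤ β ⊔ ⨆ i, a i := hsup ▸ sup_comm α β ▸ sup_le_sup_left hα β
  have htop_compact : _root_.IsCompactElement (⊤ : L) :=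
    (CompleteLattice.isCompactElement_iff_exists_le_sSup_of_le_sSup L ⊤).mpr htopc
  obtain ⟨F, hF⟩ := exists_finset_le_sup_biSup htop_compact β a hcover
  exact ⟨F, le_of_inf_eq_bot_of_top_le_sup hcomm hdist hle htop hinf hF⟩

end Reticulation
end
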